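/- Let f, f̃, h : ℝ³ → ℝ be in L¹ with ‖f‖₁ ≤ c, ‖f̃‖₁ ≤ c, ‖f̃ - f‖₁ ≤ Cδ, ‖f̃ - f - h‖₁ ≤ Cδ², and ‖h‖₁ ≤ Cδ. Set kₙ = f^{⊗n}, k̃ₙ = f̃^{⊗n}, and k'ₙ = Σᵢ f^{⊗(i-1)} ⊗ h ⊗ f^{⊗(n-i)}. Then ‖k̃ₙ - kₙ - k'ₙ‖_{L¹((ℝ³)ⁿ)} ≤ n²·C'·c^{n-1}·δ² where C' = max{C, C²/(2c)}. -/

import Mathlib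

/-!
Write `kₙ = f^{⊗n}`, `k̃ₙ = f̃^{⊗n}` and `k'ₙ` for the derivative of `kₙ` in direction `h`.
Splitting off the first coordinate gives
`k̃ₙ₊₁ - kₙ₊₁ - k'ₙ₊₁ = f ⊗ (k̃ₙ - kₙ - k'ₙ) + (f̃ - f) ⊗ (k̃ₙ - kₙ) + (f̃ - f - h) ⊗ kₙ`,
and by Fubini the L¹ norm is multiplicative on such tensor products. Together with the
bound `‖k̃ₙ - kₙ‖₁ ≤ n cⁿ⁻¹ ‖f̃ - f‖₁`, obtained the same way, induction on `n` gives the bound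
`n² M cⁿ⁻¹` as soon as `‖f̃ - f - h‖₁ ≤ M` and `‖f̃ - f‖₁² ≤ 2cM`; both hold for `M = C' δ²`.
-/

open MeasureTheory Finset

theorem Fin.prod_erase_univ {M : Type*} [CommMonoid M] {n : ℕ} (i : Fin (n + 1))
    (F : Fin (n + 1) → M) : ∏ j ∈ univ.erase i, F j = ∏ j, F (i.succAbove j) := by
  rw [← compl_singleton, ← Fin.image_succAbove_univ,
    prod_image Fin.succAbove_right_injective.injOn]

theorem Fin.prod_erase_zero {M : Type*} [CommMonoid M] {n : ℕ} (F : Fin (n + 1) → M) :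
    ∏ j ∈ univ.erase 0, F j = ∏ j : Fin n, F j.succ := by
  simp only [prod_erase_univ, succAbove_zero]

theorem Fin.prod_erase_succ {M : Type*} [CommMonoid M] {n : ℕ} (F : Fin (n + 1) → M)
    (i : Fin n) : ∏ j ∈ univ.erase i.succ, F j = F 0 * ∏ j ∈ univ.erase i, F j.succ := by
  cases n with
  | zero => exact i.elim0
  | succ n =>
    rw [prod_erase_univ, prod_erase_univ, prod_univ_succ]
    simp only [succ_succAbove_zero, succ_succAbove_succ]

section TensorPow

variable {E : Type*}

def tensorPow (f : E → ℝ) (n : ℕ) (x : Fin n → E) : ℝ := ∏ i, f (x i)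

def tensorPowDeriv (f h : E → ℝ) (n : ℕ) (x : Fin n → E) : ℝ :=
  ∑ i, h (x i) * ∏ j ∈ univ.erase i, f (x j)

lemma tensorPow_succ (f : E → ℝ) {n : ℕ} (x : Fin (n + 1) → E) :
    tensorPow f (n + 1) x = f (x 0) * tensorPow f n (Fin.tail x) :=
  Fin.prod_univ_succ _

lemma tensorPowDeriv_zero (f h : E → ℝ) : tensorPowDeriv f h 0 = 0 :=
  funext fun _ => Fin.sum_univ_zero _

lemma tensorPowDeriv_succ (f h : E → ℝ) {n : ℕ} (x : Fin (n + 1) → E) :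
    tensorPowDeriv f h (n + 1) x =
      h (x 0) * tensorPow f n (Fin.tail x) + f (x 0) * tensorPowDeriv f h n (Fin.tail x) := by
  simp only [tensorPowDeriv, tensorPow, Fin.sum_univ_succ, Fin.prod_erase_zero,
    Fin.prod_erase_succ, mul_sum, Fin.tail]
  congr 1
  refine sum_congr rfl fun i _ => ?_
  ring

end TensorPow

section Integral

variable {E : Type*} [MeasureSpace E] [SigmaFinite (volume : Measure E)]

lemma integrable_mul_tail {n : ℕ} {g : E → ℝ} {F : (Fin n → E) → ℝ} (hg : Integrable g)
    (hF : Integrable F) : Integrable fun x : Fin (n + 1) → E => g (x 0) * F (Fin.tail x) := by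
  have e := volume_preserving_piFinSuccAbove (fun _ : Fin (n + 1) => E) 0
  have := (e.integrable_comp_emb (MeasurableEquiv.measurableEmbedding _)).2 (hg.mul_prod hF)
  simpa only [MeasurableEquiv.piFinSuccAbove_apply, Fin.insertNthEquiv_zero,
    Fin.consEquiv_symm_apply, Function.comp_def] using this

lemma integral_abs_mul_tail {n : ℕ} (g : E → ℝ) (F : (Fin n → E) → ℝ) :
    ∫ x : Fin (n + 1) → E, |g (x 0) * F (Fin.tail x)| = (∫ y, |g y|) * ∫ t, |F t| := by
  have e := volume_preserving_piFinSuccAbove (fun _ : Fin (n + 1) => E) 0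
  have := e.integral_comp' (g := fun z => |g z.1| * |F z.2|)
  rw [← integral_prod_mul]
  simp only [MeasurableEquiv.piFinSuccAbove_apply] at this
  simp only [abs_mul]
  exact this

lemma integral_abs_add_le {α : Type*} [MeasurableSpace α] {μ : Measure α} {u v : α → ℝ}
    (hu : Integrable u μ) (hv : Integrable v μ) :
    ∫ x, |u x + v x| ∂μ ≤ ∫ x, |u x| ∂μ + ∫ x, |v x| ∂μ := by
  rw [← integral_add hu.abs hv.abs]
  exact integral_mono (hu.add hv).abs (hu.abs.add hv.abs) fun x => abs_add_le _ _

variable {f g h : E → ℝ}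

lemma integrable_tensorPow (hf : Integrable f) (n : ℕ) : Integrable (tensorPow f n) :=
  Integrable.fintype_prod fun _ => hf

lemma integrable_tensorPowDeriv (hf : Integrable f) (hh : Integrable h) :
    ∀ n, Integrable (tensorPowDeriv f h n)
  | 0 => by
    rw [tensorPowDeriv_zero]
    exact integrable_zero _ _ _
  | n + 1 => by
    have := (integrable_mul_tail hh (integrable_tensorPow hf n)).add
      (integrable_mul_tail hf (integrable_tensorPowDeriv hf hh n))
    exact this.congr (ae_of_all _ fun x => (tensorPowDeriv_succ f h x).symm)

lemma integral_abs_tensorPow (f : E → ℝ) (n : ℕ) :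
    ∫ x, |tensorPow f n x| = (∫ y, |f y|) ^ n := by
  simpa only [tensorPow, abs_prod, Fintype.card_fin] using
    integral_fintype_prod_volume_eq_pow (ι := Fin n) fun y => |f y|

lemma integral_abs_tensorPow_sub_le {c a : ℝ} (hf : Integrable f) (hg : Integrable g)
    (hfc : ∫ y, |f y| ≤ c) (hgc : ∫ y, |g y| ≤ c) (hgf : ∫ y, |g y - f y| ≤ a) (n : ℕ) :
    ∫ x, |tensorPow g n x - tensorPow f n x| ≤ n * c ^ (n - 1) * a := by
  induction n with
  | zero => simp [tensorPow]
  | succ n ih =>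
    have hc : 0 ≤ c := (integral_nonneg fun _ => abs_nonneg _).trans hfc
    have ha : 0 ≤ a := (integral_nonneg fun _ => abs_nonneg _).trans hgf
    calc ∫ x, |tensorPow g (n + 1) x - tensorPow f (n + 1) x|
        = ∫ x : Fin (n + 1) → E, |g (x 0) * (tensorPow g n - tensorPow f n) (Fin.tail x)
            + (g - f) (x 0) * tensorPow f n (Fin.tail x)| := by
          congr 1 with x
          congr 1
          simp only [tensorPow_succ, Pi.sub_apply]
          ring
      _ ≤ (∫ y, |g y|) * (∫ t, |(tensorPow g n - tensorPow f n) t|)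
            + (∫ y, |(g - f) y|) * ∫ t, |tensorPow f n t| := by
          rw [← integral_abs_mul_tail, ← integral_abs_mul_tail]
          exact integral_abs_add_le
            (integrable_mul_tail hg ((integrable_tensorPow hg n).sub (integrable_tensorPow hf n)))
            (integrable_mul_tail (hg.sub hf) (integrable_tensorPow hf n))
      _ ≤ c * (n * c ^ (n - 1) * a) + a * c ^ n := by
          simp only [Pi.sub_apply, integral_abs_tensorPow]
          gcongr
      _ = (n + 1 : ℕ) * c ^ (n + 1 - 1) * a := by
          cases n with
          | zero => simp
          | succ m =>
            push_cast [Nat.add_sub_cancel]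
            ring

lemma integral_abs_tensorPow_sub_sub_tensorPowDeriv_le {c a M : ℝ} (hf : Integrable f)
    (hg : Integrable g) (hh : Integrable h) (hfc : ∫ y, |f y| ≤ c) (hgc : ∫ y, |g y| ≤ c)
    (hgf : ∫ y, |g y - f y| ≤ a) (hgfh : ∫ y, |g y - f y - h y| ≤ M) (haM : a ^ 2 ≤ 2 * c * M)
    (n : ℕ) :
    ∫ x, |tensorPow g n x - tensorPow f n x - tensorPowDeriv f h n x|
      ≤ n ^ 2 * M * c ^ (n - 1) := by
  induction n with
  | zero => simp [tensorPow, tensorPowDeriv_zero]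
  | succ n ih =>
    have hc : 0 ≤ c := (integral_nonneg fun _ => abs_nonneg _).trans hfc
    have ha : 0 ≤ a := (integral_nonneg fun _ => abs_nonneg _).trans hgf
    have hkf := integrable_tensorPow hf n
    have hkgf := (integrable_tensorPow hg n).sub hkf
    have h₁ := integrable_mul_tail hf (hkgf.sub (integrable_tensorPowDeriv hf hh n))
    have h₂ := integrable_mul_tail (hg.sub hf) hkgf
    have h₃ := integrable_mul_tail ((hg.sub hf).sub hh) hkf
    calc ∫ x, |tensorPow g (n + 1) x - tensorPow f (n + 1) x - tensorPowDeriv f h (n + 1) x|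
        = ∫ x : Fin (n + 1) → E,
            |f (x 0) * (tensorPow g n - tensorPow f n - tensorPowDeriv f h n) (Fin.tail x)
              + (g - f) (x 0) * (tensorPow g n - tensorPow f n) (Fin.tail x)
              + (g - f - h) (x 0) * tensorPow f n (Fin.tail x)| := by
          congr 1 with x
          congr 1
          simp only [tensorPow_succ, tensorPowDeriv_succ, Pi.sub_apply]
          ring
      _ ≤ (∫ y, |f y|) * (∫ t, |(tensorPow g n - tensorPow f n - tensorPowDeriv f h n) t|)
            + (∫ y, |(g - f) y|) * (∫ t, |(tensorPow g n - tensorPow f n) t|)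
            + (∫ y, |(g - f - h) y|) * ∫ t, |tensorPow f n t| := by
          rw [← integral_abs_mul_tail, ← integral_abs_mul_tail, ← integral_abs_mul_tail]
          refine (integral_abs_add_le (h₁.add h₂) h₃).trans ?_
          gcongr
          exact integral_abs_add_le h₁ h₂
      _ ≤ c * (n ^ 2 * M * c ^ (n - 1)) + a * (n * c ^ (n - 1) * a) + M * c ^ n := by
          have hM : 0 ≤ M := (integral_nonneg fun _ => abs_nonneg _).trans hgfh
          simp only [Pi.sub_apply, integral_abs_tensorPow]
          gcongr
          exact integral_abs_tensorPow_sub_le hf hg hfc hgc hgf n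
      _ ≤ (n + 1 : ℕ) ^ 2 * M * c ^ (n + 1 - 1) := by
          cases n with
          | zero => simp
          | succ m =>
            push_cast [Nat.add_sub_cancel]
            linear_combination ((m : ℝ) + 1) * c ^ m * haM

end Integral

theorem stmt_8_general (f ftil h : EuclideanSpace ℝ (Fin 3) → ℝ) (c C δ : ℝ)
    (hc : 0 < c)
    (hf : Integrable f) (hftil : Integrable ftil) (hh : Integrable h)
    (hfc : ∫ x, |f x| ≤ c) (hftilc : ∫ x, |ftil x| ≤ c)
    (hdiff : ∫ x, |ftil x - f x| ≤ C * δ)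
    (hder : ∫ x, |ftil x - f x - h x| ≤ C * δ ^ 2)
    (n : ℕ) :
    ∫ x : Fin n → EuclideanSpace ℝ (Fin 3),
        |(∏ i, ftil (x i)) - (∏ i, f (x i)) -
          ∑ i, h (x i) * ∏ j ∈ Finset.univ.erase i, f (x j)|
      ≤ n ^ 2 * max C (C ^ 2 / (2 * c)) * c ^ (n - 1) * δ ^ 2 := by
  set C' := max C (C ^ 2 / (2 * c))
  have hder' : ∫ x, |ftil x - f x - h x| ≤ C' * δ ^ 2 :=
    hder.trans (mul_le_mul_of_nonneg_right (le_max_left _ _) (sq_nonneg δ))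
  have hC : C ^ 2 ≤ 2 * c * C' := by
    rw [← div_le_iff₀' (by positivity)]
    exact le_max_right _ _
  have hCδ : (C * δ) ^ 2 ≤ 2 * c * (C' * δ ^ 2) := by
    rw [mul_pow, ← mul_assoc]
    exact mul_le_mul_of_nonneg_right hC (sq_nonneg δ)
  calc _ ≤ n ^ 2 * (C' * δ ^ 2) * c ^ (n - 1) :=
        integral_abs_tensorPow_sub_sub_tensorPowDeriv_le hf hftil hh hfc hftilc hdiff hder' hCδ n
    _ = _ := by ring

theorem stmt_8 (f ftil h : EuclideanSpace ℝ (Fin 3) → ℝ) (c C δ : ℝ)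
    (hc : 0 < c)
    (hf : Integrable f) (hftil : Integrable ftil) (hh : Integrable h)
    (hfc : ∫ x, |f x| ≤ c) (hftilc : ∫ x, |ftil x| ≤ c)
    (hdiff : ∫ x, |ftil x - f x| ≤ C * δ)
    (hder : ∫ x, |ftil x - f x - h x| ≤ C * δ ^ 2)
    (hhc : ∫ x, |h x| ≤ C * δ)
    (n : ℕ) (hn : 1 ≤ n) :
    ∫ x : Fin n → EuclideanSpace ℝ (Fin 3),
        |(∏ i, ftil (x i)) - (∏ i, f (x i)) -
          ∑ i, h (x i) * ∏ j ∈ Finset.univ.erase i, f (x j)|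
      ≤ n ^ 2 * max C (C ^ 2 / (2 * c)) * c ^ (n - 1) * δ ^ 2 :=
  stmt_8_general f ftil h c C δ hc hf hftil hh hfc hftilc hdiff hder n
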